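/- Suppose ΔQ_t = ω_t·δ_t + (1-ω_t)·g_t where ω_t ∈ [ω_min, 1] with ω_min > 0, δ_t = c - Q_t (a fixed-point TD-error toward target c), |g_t| ≤ G, and Q_{t+1} = Q_t + α·ΔQ_t with α ∈ (0,1]. Then limsup_t |Q_t - c| ≤ G·(1-ω_min)/ω_min. -/

import Mathlib

open Filter

/-! A step of size `α` with trust `ω ≥ ωmin` contracts the error `Q - c` by the factor
`r = 1 - α ωmin` and adds at most `b = α (1 - ωmin) G` from the guidance. Errors obeying
`e (t+1) ≤ r e t + b` approach the fixed point `b / (1 - r) = G (1 - ωmin) / ωmin`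
of `e ↦ r e + b` geometrically. -/

theorem le_add_pow_mul_of_le_mul_add {x : ℕ → ℝ} {r b : ℝ} (hr : 0 ≤ r) (hr1 : r ≠ 1)
    (hx : ∀ t, x (t + 1) ≤ r * x t + b) (t : ℕ) :
    x t ≤ b / (1 - r) + r ^ t * (x 0 - b / (1 - r)) := by
  have hfix : r * (b / (1 - r)) + b = b / (1 - r) := by
    field_simp [sub_ne_zero.mpr hr1.symm]
    ring
  induction t with
  | zero => simp
  | succ t ih =>
    calc x (t + 1) ≤ r * x t + b := hx t
      _ ≤ r * (b / (1 - r) + r ^ t * (x 0 - b / (1 - r))) + b := by gcongr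
      _ = b / (1 - r) + r ^ (t + 1) * (x 0 - b / (1 - r)) := by
        rw [pow_succ]; linear_combination hfix

theorem limsup_le_div_of_le_mul_add {x : ℕ → ℝ} {r b : ℝ} (hr : 0 ≤ r) (hr1 : r < 1)
    (hx0 : ∀ t, 0 ≤ x t) (hx : ∀ t, x (t + 1) ≤ r * x t + b) :
    limsup x atTop ≤ b / (1 - r) := by
  have hlim : Tendsto (fun t => b / (1 - r) + r ^ t * (x 0 - b / (1 - r))) atTop
      (nhds (b / (1 - r))) := by
    simpa using ((tendsto_pow_atTop_nhds_zero_of_lt_one hr hr1).mul_const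
      (x 0 - b / (1 - r))).const_add (b / (1 - r))
  calc limsup x atTop
      ≤ limsup (fun t => b / (1 - r) + r ^ t * (x 0 - b / (1 - r))) atTop :=
        limsup_le_limsup (Eventually.of_forall (le_add_pow_mul_of_le_mul_add hr hr1.ne hx))
          (isCoboundedUnder_le_of_le atTop hx0) hlim.isBoundedUnder_le
    _ = b / (1 - r) := hlim.limsup_eq

theorem abs_mixed_step_le {α ω ωmin e g G : ℝ} (hα0 : 0 < α) (hα1 : α ≤ 1)
    (hωmin : ωmin ≤ ω) (hω1 : ω ≤ 1) (hg : |g| ≤ G) :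
    |(1 - α * ω) * e + α * (1 - ω) * g| ≤ (1 - α * ωmin) * |e| + α * (1 - ωmin) * G := by
  have hcontr : 0 ≤ 1 - α * ω := by nlinarith
  have hguide : 0 ≤ α * (1 - ω) := mul_nonneg hα0.le (by linarith)
  calc |(1 - α * ω) * e + α * (1 - ω) * g|
      ≤ (1 - α * ω) * |e| + α * (1 - ω) * |g| := by
        refine (abs_add_le _ _).trans_eq ?_
        rw [abs_mul, abs_mul (α * (1 - ω)), abs_of_nonneg hcontr, abs_of_nonneg hguide]
    _ ≤ (1 - α * ωmin) * |e| + α * (1 - ωmin) * G := by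
        gcongr
        exact mul_nonneg hα0.le (by linarith)

theorem stmt_15_general (α c G ωmin : ℝ) (hα0 : 0 < α) (hα1 : α ≤ 1)
    (hωmin : 0 < ωmin)
    (ω g : ℕ → ℝ) (hω : ∀ t, ωmin ≤ ω t ∧ ω t ≤ 1) (hg : ∀ t, |g t| ≤ G)
    (Q : ℕ → ℝ)
    (hQ : ∀ t, Q (t + 1) = Q t + α * (ω t * (c - Q t) + (1 - ω t) * g t)) :
    limsup (fun t => |Q t - c|) atTop ≤ G * (1 - ωmin) / ωmin := by
  have hωmin1 : ωmin ≤ 1 := (hω 0).1.trans (hω 0).2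
  have hstep : ∀ t, |Q (t + 1) - c| ≤ (1 - α * ωmin) * |Q t - c| + α * (1 - ωmin) * G := by
    intro t
    have herr : Q (t + 1) - c = (1 - α * ω t) * (Q t - c) + α * (1 - ω t) * g t := by
      rw [hQ t]; ring
    rw [herr]
    exact abs_mixed_step_le hα0 hα1 (hω t).1 (hω t).2 (hg t)
  have hfix : α * (1 - ωmin) * G / (1 - (1 - α * ωmin)) = G * (1 - ωmin) / ωmin := by
    field_simp
    ring
  rw [← hfix]
  exact limsup_le_div_of_le_mul_add (by nlinarith) (sub_lt_self _ (mul_pos hα0 hωmin))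
    (fun t => abs_nonneg _) hstep

/-- scalar CADENT model: with trust bounded below by ω_min > 0,
bounded teacher guidance |g_t| ≤ G, and δ_t = c - Q_t, the iterates satisfy
limsup |Q_t - c| ≤ G (1 - ω_min)/ω_min. -/
theorem stmt_15 (α c G ωmin : ℝ) (hα0 : 0 < α) (hα1 : α ≤ 1)
    (hωmin : 0 < ωmin) (hG : 0 ≤ G)
    (ω g : ℕ → ℝ) (hω : ∀ t, ωmin ≤ ω t ∧ ω t ≤ 1) (hg : ∀ t, |g t| ≤ G)
    (Q : ℕ → ℝ)
    (hQ : ∀ t, Q (t + 1) = Q t + α * (ω t * (c - Q t) + (1 - ω t) * g t)) :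
    limsup (fun t => |Q t - c|) atTop ≤ G * (1 - ωmin) / ωmin :=
  stmt_15_general α c G ωmin hα0 hα1 hωmin ω g hω hg Q hQ
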